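/- Let c be a 3-edge-coloring of the complete graph on a k-element vertex set A and h a 3-edge-coloring of the complete graph on an m-element vertex set B. Define the blow-up coloring G on the vertex set A × B by: the color of the edge {(a,b),(a',b')} is c({a,a'}) if a ≠ a', and h({b,b'}) if a = a' (and b ≠ b'). Then the number of rainbow triangles of G equals m^3·F(c) + k·F(h), where F(c) and F(h) denote the numbers of rainbow triangles in c and h respectively. -/

import Mathlib

/-- A triangle (3-element vertex set) is rainbow: its three edges get pairwise distinct colors. -/
def IsRainbow {V : Type*} [DecidableEq V] (G : Sym2 V → Fin 3) (T : Finset V) : Prop :=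
  ∃ u v w : V, T = {u, v, w} ∧ u ≠ v ∧ u ≠ w ∧ v ≠ w ∧
    G s(u, v) ≠ G s(u, w) ∧ G s(u, v) ≠ G s(v, w) ∧ G s(u, w) ≠ G s(v, w)

/-- The number of rainbow triangles of a 3-edge-coloring. -/
noncomputable def rbCount {V : Type*} [DecidableEq V] (G : Sym2 V → Fin 3) : ℕ :=
  Nat.card {T : Finset V // IsRainbow G T}

/-- `maxRb n` is `F(n)`: the maximum number of rainbow triangles over all
3-edge-colorings of the complete graph on `n` vertices. -/
noncomputable def maxRb (n : ℕ) : ℕ :=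
  Finset.univ.sup fun G : Sym2 (Fin n) → Fin 3 => rbCount G

/-!
Ordered rainbow triangles (injective maps `Fin 3 → V` onto a rainbow triangle) are six times as
many as rainbow triangles and are easier to count in the blow-up. A triangle is rainbow iff it
is properly colored (the two edges at each vertex get different colors), a condition that does
not depend on the order of the vertices.

In the blow-up a rainbow triangle cannot have exactly two vertices in the same fibre `{a} × B`:
the two edges leaving the third vertex would both get the color of the same edge of `c`.
So its first coordinates are either all distinct — it is then a rainbow triangle of `c`
together with an arbitrary choice of three second coordinates, `m ^ 3` choices — or all
equal, and it is then a rainbow triangle of `h` inside one of the `k` fibres.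
-/

open Finset Function

section OrderedTriangles

variable {V : Type*}

def IsRainbowTriple (G : Sym2 V → Fin 3) (f : Fin 3 → V) : Prop :=
  ∀ i j l : Fin 3, i ≠ j → i ≠ l → j ≠ l → G s(f i, f j) ≠ G s(f i, f l)

instance (G : Sym2 V → Fin 3) : DecidablePred (IsRainbowTriple G) :=
  fun _ => by unfold IsRainbowTriple; infer_instance

theorem isRainbowTriple_iff_of_color_eq {W : Type*} {G : Sym2 V → Fin 3} {G' : Sym2 W → Fin 3}
    {f : Fin 3 → V} {g : Fin 3 → W} (H : ∀ i j, i ≠ j → G s(f i, f j) = G' s(g i, g j)) :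
    IsRainbowTriple G f ↔ IsRainbowTriple G' g := by
  constructor <;> intro hf i j l hij hil hjl
  · rw [← H i j hij, ← H i l hil]; exact hf i j l hij hil hjl
  · rw [H i j hij, H i l hil]; exact hf i j l hij hil hjl

namespace IsRainbowTriple

variable {G : Sym2 V → Fin 3} {f : Fin 3 → V}

theorem injective (hf : IsRainbowTriple G f) : Injective f := by
  have hthird : ∀ i j : Fin 3, ∃ l, l ≠ i ∧ l ≠ j := by decide
  intro i j hfij
  by_contra hij
  obtain ⟨l, hli, hlj⟩ := hthird i j
  exact hf l i j hli hlj hij (by rw [hfij])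

theorem isRainbow_image [DecidableEq V] (hf : IsRainbowTriple G f) :
    IsRainbow G (univ.image f) := by
  have hinj := hf.injective
  refine ⟨f 0, f 1, f 2, ?_, hinj.ne (by decide), hinj.ne (by decide), hinj.ne (by decide),
    hf 0 1 2 (by decide) (by decide) (by decide), ?_, ?_⟩
  · ext x
    simp [Fin.exists_fin_succ, eq_comm]
  · simpa only [Sym2.eq_swap] using hf 1 0 2 (by decide) (by decide) (by decide)
  · simpa only [Sym2.eq_swap] using hf 2 0 1 (by decide) (by decide) (by decide)

end IsRainbowTriple

variable [DecidableEq V]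

theorem IsRainbow.color_ne {G : Sym2 V → Fin 3} {T : Finset V} (hT : IsRainbow G T)
    {x y z : V} (hx : x ∈ T) (hy : y ∈ T) (hz : z ∈ T) (hxy : x ≠ y) (hxz : x ≠ z)
    (hyz : y ≠ z) : G s(x, y) ≠ G s(x, z) := by
  obtain ⟨u, v, w, rfl, -, -, -, huvw, huvvw, huwvw⟩ := hT
  simp only [mem_insert, mem_singleton] at hx hy hz
  rcases hx with rfl | rfl | rfl <;> rcases hy with rfl | rfl | rfl <;>
    rcases hz with rfl | rfl | rfl <;> simp_all [Sym2.eq_swap, eq_comm]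

theorem IsRainbow.isRainbowTriple {G : Sym2 V → Fin 3} {T : Finset V} (hT : IsRainbow G T)
    {f : Fin 3 → V} (hinj : Injective f) (himage : univ.image f = T) : IsRainbowTriple G f := by
  have hmem : ∀ i, f i ∈ T := fun i => himage ▸ mem_image_of_mem f (mem_univ i)
  intro i j l hij hil hjl
  exact hT.color_ne (hmem i) (hmem j) (hmem l) (hinj.ne hij) (hinj.ne hil) (hinj.ne hjl)

theorem IsRainbow.card_eq_three {G : Sym2 V → Fin 3} {T : Finset V} (hT : IsRainbow G T) :
    #T = 3 := by
  obtain ⟨u, v, w, rfl, huv, huw, hvw, -⟩ := hT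
  exact Finset.card_eq_three.2 ⟨u, v, w, huv, huw, hvw, rfl⟩

variable [Fintype V]

theorem card_injective_image_eq {n : ℕ} {T : Finset V} (hT : #T = n) :
    #{f : Fin n → V | Injective f ∧ univ.image f = T} = n.factorial := by
  have henum : ({f : Fin n → V | Injective f ∧ univ.image f = T} : Finset _) =
      (univ : Finset (Fin n ≃ T)).image fun e i => (e i : V) := by
    ext f
    simp only [mem_filter, mem_univ, true_and, mem_image]
    constructor
    · rintro ⟨hinj, rfl⟩
      refine ⟨Equiv.ofBijective (fun i => ⟨f i, mem_image_of_mem f (mem_univ i)⟩) ⟨?_, ?_⟩, rfl⟩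
      · exact fun i j hij => hinj (congrArg Subtype.val hij)
      · rintro ⟨x, hx⟩
        obtain ⟨i, -, rfl⟩ := mem_image.1 hx
        exact ⟨i, rfl⟩
    · rintro ⟨e, rfl⟩
      refine ⟨Subtype.val_injective.comp e.injective, ?_⟩
      ext x
      simp only [mem_image, mem_univ, true_and]
      exact ⟨by rintro ⟨i, rfl⟩; exact (e i).2, fun hx => ⟨e.symm ⟨x, hx⟩, by simp⟩⟩
  have hval : Injective fun (e : Fin n ≃ T) i => (e i : V) :=
    fun e e' hee' => Equiv.ext fun i => Subtype.ext (congrFun hee' i)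
  rw [henum, card_image_of_injective _ hval, card_univ,
    Fintype.card_equiv (T.equivFinOfCardEq hT).symm, Fintype.card_fin]

theorem card_isRainbowTriple_eq_six_mul_rbCount (G : Sym2 V → Fin 3) :
    #{f | IsRainbowTriple G f} = 6 * rbCount G := by
  classical
  have hmaps : Set.MapsTo (fun f : Fin 3 → V => univ.image f)
      ({f | IsRainbowTriple G f} : Finset _) ({T | IsRainbow G T} : Finset _) := by
    intro f hf
    simpa using (mem_filter.1 hf).2.isRainbow_image
  have hfibre : ∀ T ∈ ({T | IsRainbow G T} : Finset (Finset V)),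
      #{f ∈ {f | IsRainbowTriple G f} | univ.image f = T} = 6 := by
    intro T hT
    replace hT := (mem_filter.1 hT).2
    rw [filter_filter, show 6 = Nat.factorial 3 from rfl,
      ← card_injective_image_eq hT.card_eq_three]
    congr 1
    ext f
    simp only [mem_filter, mem_univ, true_and]
    constructor
    · rintro ⟨hf, rfl⟩
      exact ⟨hf.injective, rfl⟩
    · rintro ⟨hinj, himage⟩
      exact ⟨hT.isRainbowTriple hinj himage, himage⟩
  rw [card_eq_sum_card_fiberwise hmaps, sum_const_nat hfibre, rbCount, Nat.card_eq_fintype_card,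
    Fintype.card_subtype, mul_comm]

end OrderedTriangles

section BlowUp

variable {α β : Type*} [DecidableEq α]

def IsBlowup (c : Sym2 α → Fin 3) (h : Sym2 β → Fin 3) (G : Sym2 (α × β) → Fin 3) : Prop :=
  ∀ p q : α × β, p ≠ q → G s(p, q) = if p.1 = q.1 then h s(p.2, q.2) else c s(p.1, q.1)

namespace IsBlowup

variable {c : Sym2 α → Fin 3} {h : Sym2 β → Fin 3} {G : Sym2 (α × β) → Fin 3}

theorem apply_of_fst_ne (hG : IsBlowup c h G) {p q : α × β} (hpq : p.1 ≠ q.1) :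
    G s(p, q) = c s(p.1, q.1) := by
  rw [hG p q (fun h => hpq (congrArg Prod.fst h)), if_neg hpq]

theorem apply_of_fst_eq (hG : IsBlowup c h G) {p q : α × β} (h₁ : p.1 = q.1) (h₂ : p.2 ≠ q.2) :
    G s(p, q) = h s(p.2, q.2) := by
  rw [hG p q (fun h => h₂ (congrArg Prod.snd h)), if_pos h₁]

theorem isRainbowTriple_iff_of_injective_fst (hG : IsBlowup c h G) {f : Fin 3 → α × β}
    (hf : Injective (Prod.fst ∘ f)) : IsRainbowTriple G f ↔ IsRainbowTriple c (Prod.fst ∘ f) :=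
  isRainbowTriple_iff_of_color_eq fun _ _ hij => hG.apply_of_fst_ne (hf.ne hij)

theorem isRainbowTriple_mk_iff (hG : IsBlowup c h G) (a : α) (g : Fin 3 → β) :
    IsRainbowTriple G (fun i => (a, g i)) ↔ IsRainbowTriple h g := by
  have key (hg : Injective g) : IsRainbowTriple G (fun i => (a, g i)) ↔ IsRainbowTriple h g :=
    isRainbowTriple_iff_of_color_eq fun _ _ hij => hG.apply_of_fst_eq rfl (hg.ne hij)
  exact ⟨fun hf => (key (Injective.of_comp (f := Prod.mk a) hf.injective)).1 hf,
    fun hg => (key hg.injective).2 hg⟩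

theorem fst_eq_of_isRainbowTriple (hG : IsBlowup c h G) {f : Fin 3 → α × β}
    (hf : IsRainbowTriple G f) {i j : Fin 3} (hij : i ≠ j) (hfij : (f i).1 = (f j).1) (l : Fin 3) :
    (f l).1 = (f i).1 := by
  by_contra hli
  have hlj : (f l).1 ≠ (f j).1 := hfij ▸ hli
  refine hf l i j (fun h => hli (h ▸ rfl)) (fun h => hlj (h ▸ rfl)) hij ?_
  rw [hG.apply_of_fst_ne hli, hG.apply_of_fst_ne hlj, hfij]

theorem fst_const_of_not_injective (hG : IsBlowup c h G) {f : Fin 3 → α × β}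
    (hf : IsRainbowTriple G f) (hinj : ¬ Injective (Prod.fst ∘ f)) (l : Fin 3) :
    (f l).1 = (f 0).1 := by
  obtain ⟨i, j, hfij, hij⟩ := not_injective_iff.1 hinj
  rw [hG.fst_eq_of_isRainbowTriple hf hij hfij l, hG.fst_eq_of_isRainbowTriple hf hij hfij 0]

variable [Fintype α] [Fintype β]

theorem card_isRainbowTriple_injective_fst (hG : IsBlowup c h G) :
    #{f | IsRainbowTriple G f ∧ Injective (Prod.fst ∘ f)} =
      #{g | IsRainbowTriple c g} * Fintype.card β ^ 3 := by
  have hcube : Fintype.card β ^ 3 = #(univ : Finset (Fin 3 → β)) := by simp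
  rw [hcube, ← card_product]
  refine card_nbij' (fun f => (Prod.fst ∘ f, Prod.snd ∘ f)) (fun p i => (p.1 i, p.2 i))
    ?_ ?_ (fun _ _ => rfl) (fun _ _ => rfl)
  · intro f hf
    obtain ⟨hrb, hinj⟩ := (mem_filter.1 hf).2
    exact mem_product.2 ⟨mem_filter.2 ⟨mem_univ _,
      (hG.isRainbowTriple_iff_of_injective_fst hinj).1 hrb⟩, mem_univ _⟩
  · rintro ⟨g, b⟩ hg
    replace hg := (mem_filter.1 (mem_product.1 hg).1).2
    have hinj : Injective (Prod.fst ∘ fun i => (g i, b i)) := hg.injective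
    exact mem_filter.2 ⟨mem_univ _, (hG.isRainbowTriple_iff_of_injective_fst hinj).2 hg, hinj⟩

theorem card_isRainbowTriple_not_injective_fst (hG : IsBlowup c h G) :
    #{f | IsRainbowTriple G f ∧ ¬ Injective (Prod.fst ∘ f)} =
      Fintype.card α * #{g | IsRainbowTriple h g} := by
  have hmk : ∀ f ∈ ({f | IsRainbowTriple G f ∧ ¬ Injective (Prod.fst ∘ f)} : Finset _),
      (fun i => ((f 0).1, (f i).2)) = f := by
    intro f hf
    obtain ⟨hrb, hinj⟩ := (mem_filter.1 hf).2
    exact funext fun i => Prod.ext (hG.fst_const_of_not_injective hrb hinj i).symm rfl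
  rw [← card_univ, ← card_product]
  refine card_nbij' (fun f => ((f 0).1, Prod.snd ∘ f)) (fun p i => (p.1, p.2 i))
    ?_ ?_ hmk (fun _ _ => rfl)
  · intro f hf
    refine mem_product.2 ⟨mem_univ _, mem_filter.2 ⟨mem_univ _, ?_⟩⟩
    refine (hG.isRainbowTriple_mk_iff (f 0).1 _).1 ?_
    convert (mem_filter.1 hf).2.1 using 1
    exact hmk f hf
  · rintro ⟨a, g⟩ hg
    replace hg := (mem_filter.1 (mem_product.1 hg).2).2
    refine mem_filter.2 ⟨mem_univ _, (hG.isRainbowTriple_mk_iff a g).2 hg, fun hinj => ?_⟩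
    exact absurd (hinj rfl : (0 : Fin 3) = 1) (by decide)

theorem card_isRainbowTriple (hG : IsBlowup c h G) :
    #{f | IsRainbowTriple G f} = #{g | IsRainbowTriple c g} * Fintype.card β ^ 3 +
      Fintype.card α * #{g | IsRainbowTriple h g} := by
  rw [← card_filter_add_card_filter_not (fun f : Fin 3 → α × β => Injective (Prod.fst ∘ f)),
    filter_filter, filter_filter, hG.card_isRainbowTriple_injective_fst,
    hG.card_isRainbowTriple_not_injective_fst]

end IsBlowup

end BlowUp

theorem stmt14 (k m : ℕ)
    (c : Sym2 (Fin k) → Fin 3) (h : Sym2 (Fin m) → Fin 3)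
    (G : Sym2 (Fin k × Fin m) → Fin 3)
    (hG : ∀ p q : Fin k × Fin m, p ≠ q →
      G s(p, q) = if p.1 = q.1 then h s(p.2, q.2) else c s(p.1, q.1)) :
    rbCount G = m ^ 3 * rbCount c + k * rbCount h := by
  have key := IsBlowup.card_isRainbowTriple (show IsBlowup c h G from hG)
  simp only [card_isRainbowTriple_eq_six_mul_rbCount, Fintype.card_fin] at key
  linarith
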